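/- arXiv:2306.16888 — 6 statements merged into one kernel-verified Lean document; each statement's English description precedes it below -/
import Mathlib

section
/- Let ≺ be a binary relation from a set A to a set X. Then ≺ is a biorder (Ferrers: for all a,b∈A, x,y∈X, a≺x and b≺y imply a≺y or b≺x) if and only if both traces ≾* on A (defined by a ≾* b iff for all x∈X, b≺x implies a≺x) and ≾** on X (defined by x ≾** y iff for all a∈A, a≺x implies a≺y) are total preorders. -/
/-- A relation `r` from `A` to `X` is a biorder (Ferrers) iff both its traces
(the left trace on `A` and the right trace on `X`) are total preorders. -/
theorem stmt_0 {A X : Type*} (r : A → X → Prop) :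
    (∀ a b x y, r a x → r b y → r a y ∨ r b x) ↔
    ((Reflexive (fun a b : A => ∀ x, r b x → r a x) ∧
      Transitive (fun a b : A => ∀ x, r b x → r a x) ∧
      (∀ a b : A, (∀ x, r b x → r a x) ∨ (∀ x, r a x → r b x))) ∧
     (Reflexive (fun x y : X => ∀ a, r a x → r a y) ∧
      Transitive (fun x y : X => ∀ a, r a x → r a y) ∧
      (∀ x y : X, (∀ a, r a x → r a y) ∨ (∀ a, r a y → r a x)))) := by
  constructor
  · intro F
    refine ⟨⟨fun a x h => h, fun a b c hab hbc x h => hab x (hbc x h), ?_⟩,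
            ⟨fun x a h => h, fun x y z hxy hyz a h => hyz a (hxy a h), ?_⟩⟩
    · intro a b
      by_contra h
      push_neg at h
      obtain ⟨⟨x, hbx, hax⟩, ⟨y, hay, hby⟩⟩ := h
      rcases F a b y x hay hbx with h | h <;> [exact hax h; exact hby h]
    · intro x y
      by_contra h
      push_neg at h
      obtain ⟨⟨a, hax, hay⟩, ⟨b, hby, hbx⟩⟩ := h
      rcases F a b x y hax hby with h | h <;> [exact hay h; exact hbx h]
  · rintro ⟨⟨-, -, hA⟩, -⟩ a b x y hax hby
    rcases hA a b with h | h
    · exact Or.inl (h y hby)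
    · exact Or.inr (h x hax)
end

section
/- Let A and B be disjoint sets, each equipped with a total order ≾_A and ≾_B respectively, and let P₁ and P₂ be two communications from A to B (finite relations in which each sender sends to exactly one receiver and each receiver receives from exactly one sender). Let →₁ and →₂ be the transitive closures of ≾_A ∪ ≾_B ∪ P₁ and ≾_A ∪ ≾_B ∪ P₂ respectively. If →₁ = →₂, then either P₁ = P₂ or the causal ordering of messages fails for one of the communications (i.e., there exist (a,b),(a',b') in the same communication with a strictly before a' in A but b' strictly before b in B, or the bijectivity condition is violated). -/
/-- Generating relation of the causal precedence on `A ⊕ B`. -/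
def sumBase {A B : Type*} [Preorder A] [Preorder B] (P : A → B → Prop) :
    A ⊕ B → A ⊕ B → Prop
  | Sum.inl a, Sum.inl a' => a ≤ a'
  | Sum.inl a, Sum.inr b => P a b
  | Sum.inr b, Sum.inr b' => b ≤ b'
  | Sum.inr _, Sum.inl _ => False

/-- Characterization target for the transitive closure of `sumBase P`. -/
def sumQ {A B : Type*} [Preorder A] [Preorder B] (P : A → B → Prop) :
    A ⊕ B → A ⊕ B → Prop
  | Sum.inl a, Sum.inl a' => a ≤ a'
  | Sum.inl a, Sum.inr b => ∃ a' b', a ≤ a' ∧ P a' b' ∧ b' ≤ b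
  | Sum.inr b, Sum.inr b' => b ≤ b'
  | Sum.inr _, Sum.inl _ => False

lemma transGen_sumQ {A B : Type*} [Preorder A] [Preorder B] (P : A → B → Prop)
    {p q : A ⊕ B} (h : Relation.TransGen (sumBase P) p q) : sumQ P p q := by
  induction h with
  | single h =>
    rename_i q
    cases p <;> cases q <;> simp_all [sumBase, sumQ]
    exact ⟨_, le_refl _, _, h, le_refl _⟩
  | tail _ hstep ih =>
    rename_i c q _
    cases c with
    | inl c =>
      cases q with
      | inl q =>
        cases p with
        | inl a => exact le_trans ih hstep
        | inr b => exact ih.elim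
      | inr q =>
        cases p with
        | inl a => exact ⟨c, q, ih, hstep, le_refl _⟩
        | inr b => exact ih.elim
    | inr c =>
      cases q with
      | inl q => exact hstep.elim
      | inr q =>
        cases p with
        | inl a =>
          obtain ⟨a', b', h1, h2, h3⟩ := ih
          exact ⟨a', b', h1, h2, le_trans h3 hstep⟩
        | inr b => exact le_trans ih hstep

lemma key {A B : Type*} [LinearOrder A] [LinearOrder B]
    (P₁ P₂ : A → B → Prop)
    (h1s : ∀ a a' b, P₁ a b → P₁ a' b → a = a')
    (h1r : ∀ a b b', P₁ a b → P₁ a b' → b = b')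
    (heq : ∀ p q : A ⊕ B,
      Relation.TransGen (sumBase P₁) p q ↔ Relation.TransGen (sumBase P₂) p q)
    {a : A} {b : B} (h : P₁ a b) (hn : ¬ P₂ a b) :
    ∃ a b a' b', P₁ a b ∧ P₁ a' b' ∧ a < a' ∧ b' < b := by
  have t1 : Relation.TransGen (sumBase P₂) (Sum.inl a) (Sum.inr b) :=
    (heq _ _).1 (Relation.TransGen.single h)
  obtain ⟨a₁, b₁, ha1, hP2, hb1⟩ := transGen_sumQ P₂ t1
  have t2 : Relation.TransGen (sumBase P₁) (Sum.inl a₁) (Sum.inr b₁) :=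
    (heq _ _).2 (Relation.TransGen.single hP2)
  obtain ⟨a₂, b₂, ha2, hP1, hb2⟩ := transGen_sumQ P₁ t2
  have haa : a ≤ a₂ := le_trans ha1 ha2
  have hbb : b₂ ≤ b := le_trans hb2 hb1
  rcases eq_or_lt_of_le haa with hEq | hlt
  · -- a = a₂ forces P₂ a b, contradiction
    exfalso
    apply hn
    have hP1' : P₁ a b₂ := by rw [hEq]; exact hP1
    have hb : b₂ = b := h1r a b₂ b hP1' h
    have eb : b₁ = b := le_antisymm hb1 (hb ▸ hb2)
    have ea : a₁ = a := le_antisymm (hEq ▸ ha2) ha1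
    rw [← ea, ← eb]
    exact hP2
  rcases eq_or_lt_of_le hbb with hEq | hltb
  · -- b₂ = b forces a₂ = a, contradiction with a < a₂
    exfalso
    have hP1' : P₁ a₂ b := by rw [← hEq]; exact hP1
    exact absurd (h1s a₂ a b hP1' h) (ne_of_gt hlt)
  exact ⟨a, b, a₂, b₂, h, hP1, hlt, hltb⟩

/-- If two communications `P₁`, `P₂` between the same two disjoint chains induce the same
causal precedence, then either `P₁ = P₂` or the causal ordering of messages fails for one
of them. -/
theorem stmt_5 {A B : Type*} [LinearOrder A] [LinearOrder B]
    (P₁ P₂ : A → B → Prop)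
    (h1fin : {p : A × B | P₁ p.1 p.2}.Finite)
    (h2fin : {p : A × B | P₂ p.1 p.2}.Finite)
    (h1s : ∀ a a' b, P₁ a b → P₁ a' b → a = a')
    (h1r : ∀ a b b', P₁ a b → P₁ a b' → b = b')
    (h2s : ∀ a a' b, P₂ a b → P₂ a' b → a = a')
    (h2r : ∀ a b b', P₂ a b → P₂ a b' → b = b')
    (heq : ∀ p q : A ⊕ B,
      Relation.TransGen (sumBase P₁) p q ↔ Relation.TransGen (sumBase P₂) p q) :
    (∀ a b, P₁ a b ↔ P₂ a b) ∨
    (∃ a b a' b', P₁ a b ∧ P₁ a' b' ∧ a < a' ∧ b' < b) ∨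
    (∃ a b a' b', P₂ a b ∧ P₂ a' b' ∧ a < a' ∧ b' < b) := by
  by_cases hall : ∀ a b, P₁ a b ↔ P₂ a b
  · exact Or.inl hall
  push_neg at hall
  obtain ⟨a, b, hiff⟩ := hall
  rcases hiff with ⟨h1, h2⟩ | ⟨h1, h2⟩
  · exact Or.inr (Or.inl (key P₁ P₂ h1s h1r heq h1 h2))
  · have heq' : ∀ p q : A ⊕ B,
        Relation.TransGen (sumBase P₂) p q ↔ Relation.TransGen (sumBase P₁) p q :=
      fun p q => (heq p q).symm
    exact Or.inr (Or.inr (key P₂ P₁ h2s h2r heq' h2 h1))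
end

section
/- Let (X₁,≾₁)∪(X₂,≾₂) be a distributed system with a single communication P from X₁ to X₂, and let v : X₂ → (0,1) be increasing. Assume the set {v(y) : x P̄ y} attains its infimum whenever nonempty (e.g., P finite). Then the pair (op̲(v), v) represents the biorder P̄ with respect to ≤: for all x∈X₁, y∈X₂, x P̄ y ⟺ op̲(v)(x) ≤ v(y), where op̲(v)(x) = inf{v(y) : x P̄ y} with inf ∅ = 1, provided v strictly represents ≾₂ (y ≾₂ y' ⟺ v(y) ≤ v(y')). -/
open Classical in
/-- The biorder `P̄ = ≤ ∘ P ∘ ≤` induced by a relation between two ordered sets. -/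
def pbar2 {X₁ X₂ : Type*} [Preorder X₁] [Preorder X₂] (P : X₁ → X₂ → Prop)
    (x : X₁) (y : X₂) : Prop :=
  ∃ x' y', x ≤ x' ∧ P x' y' ∧ y' ≤ y

open Classical in
/-- The lower operator: `op̲(v)(x) = inf {v y : x R y}`, with `inf ∅ = 1`. -/
noncomputable def opInf {X₁ X₂ : Type*} (R : X₁ → X₂ → Prop) (v : X₂ → ℝ) (x : X₁) : ℝ :=
  if ∃ y, R x y then sInf {t | ∃ y, R x y ∧ v y = t} else 1

open Classical in
/-- The upper operator: `op̄(u)(y) = sup {u x : x R y}`, with `sup ∅ = 0`. -/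
noncomputable def opSup {X₁ X₂ : Type*} (R : X₁ → X₂ → Prop) (u : X₁ → ℝ) (y : X₂) : ℝ :=
  if ∃ x, R x y then sSup {t | ∃ x, R x y ∧ u x = t} else 0

/-- The pair `(op̲(v), v)` represents the biorder `P̄` with respect to `≤`:
`x P̄ y ↔ op̲(v)(x) ≤ v y`, provided `v` is a utility for `≤` on `X₂` with values in
`(0,1)` and the defining infima are attained whenever nonempty. -/
theorem stmt_9 {X₁ X₂ : Type*} [LinearOrder X₁] [LinearOrder X₂]
    (P : X₁ → X₂ → Prop)
    (hfin : {p : X₁ × X₂ | P p.1 p.2}.Finite)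
    (hs : ∀ a a' b, P a b → P a' b → a = a')
    (hr : ∀ a b b', P a b → P a b' → b = b')
    (v : X₂ → ℝ) (hv : ∀ y y' : X₂, y ≤ y' ↔ v y ≤ v y')
    (hv01 : ∀ y, v y ∈ Set.Ioo (0 : ℝ) 1)
    (hatt : ∀ x : X₁, (∃ y, pbar2 P x y) →
      ∃ y, pbar2 P x y ∧ ∀ y', pbar2 P x y' → v y ≤ v y') :
    ∀ (x : X₁) (y : X₂), pbar2 P x y ↔ opInf (pbar2 P) v x ≤ v y := by

  intro x y
  constructor
  · intro h
    have hne : ∃ y, pbar2 P x y := ⟨y, h⟩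
    rw [opInf, if_pos hne]
    have hbdd : BddBelow {t | ∃ y, pbar2 P x y ∧ v y = t} :=
      ⟨0, fun t ht => by obtain ⟨y', _, rfl⟩ := ht; exact (hv01 y').1.le⟩
    exact csInf_le hbdd ⟨y, h, rfl⟩
  · intro h
    by_cases hne : ∃ y, pbar2 P x y
    · obtain ⟨y₀, hy₀, hmin⟩ := hatt x hne
      have hlb : ∀ t ∈ {t | ∃ y, pbar2 P x y ∧ v y = t}, v y₀ ≤ t := by
        rintro t ⟨y', hy', rfl⟩; exact hmin y' hy'
      have : sInf {t | ∃ y, pbar2 P x y ∧ v y = t} = v y₀ :=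
        le_antisymm (csInf_le ⟨0, fun t ht => by obtain ⟨y', _, rfl⟩ := ht; exact (hv01 y').1.le⟩ ⟨y₀, hy₀, rfl⟩)
          (le_csInf ⟨v y₀, y₀, hy₀, rfl⟩ hlb)
      rw [opInf, if_pos hne, this] at h
      obtain ⟨x', y', hx, hP, hy⟩ := hy₀
      exact ⟨x', y', hx, hP, hy.trans ((hv y₀ y).mpr h)⟩
    · rw [opInf, if_neg hne] at h
      exact absurd (h.trans_lt (hv01 y).2) (lt_irrefl 1)
end

section
/- Let (X₁∪X₂∪X₃, P₁₂ ∪ P₂₃) be a distributed system of three chains with line communication, and suppose (u₁,v₁) represents the biorder P̄₁₂ (x P̄₁₂ y ⟺ u₁(x) < v₁(y)) and (u₂,v₂) represents P̄₂₃, with all four functions taking values in (0,1), and u₁, v₁, u₂, v₂ strictly increasing on their respective chains. Define u = u₁ + u_{u₂} on X₁, v = v₁ + u₂ on X₂, w = v₂ + v_{v₁} on X₃, where u_{u₂}(x) = inf{u₂(y) : x P̄₁₂ y} (inf ∅ = 1) and v_{v₁}(z) = sup{v₁(y) : y P̄₂₃ z} (sup ∅ = 0). Then (u,v,w) is a weak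 representation of the distributed system: each of u,v,w strictly represents the total order on its process, x P̄₁₂ y implies u(x) < v(y), y P̄₂₃ z implies v(y) < w(z), and x P̄₁₂ y P̄₂₃ z implies u(x) < w(z). -/
section Helpers
variable {A B : Type*}

lemma opInf_le {R : A → B → Prop} {v : B → ℝ}
    (h0 : ∀ y, 0 ≤ v y) {x : A} {y : B} (h : R x y) : opInf R v x ≤ v y := by
  rw [opInf, if_pos ⟨y, h⟩]
  exact csInf_le ⟨0, fun t ⟨y', _, hy'⟩ => hy' ▸ h0 y'⟩ ⟨y, h, rfl⟩

lemma opInf_le_one {R : A → B → Prop} {v : B → ℝ}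
    (h0 : ∀ y, 0 ≤ v y) (h1 : ∀ y, v y ≤ 1) (x : A) : opInf R v x ≤ 1 := by
  by_cases h : ∃ y, R x y
  · obtain ⟨y, hy⟩ := h
    exact (opInf_le h0 hy).trans (h1 y)
  · rw [opInf, if_neg h]

lemma le_opSup {R : A → B → Prop} {u : A → ℝ}
    (h1 : ∀ x, u x ≤ 1) {x : A} {y : B} (h : R x y) : u x ≤ opSup R u y := by
  rw [opSup, if_pos ⟨x, h⟩]
  exact le_csSup ⟨1, fun t ⟨x', _, hx'⟩ => hx' ▸ h1 x'⟩ ⟨x, h, rfl⟩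

lemma opSup_nonneg {R : A → B → Prop} {u : A → ℝ}
    (h0 : ∀ x, 0 ≤ u x) (h1 : ∀ x, u x ≤ 1) (y : B) : 0 ≤ opSup R u y := by
  by_cases h : ∃ x, R x y
  · obtain ⟨x, hx⟩ := h
    exact (h0 x).trans (le_opSup h1 hx)
  · rw [opSup, if_neg h]

lemma opInf_mono {R : A → B → Prop} {v : B → ℝ}
    (h0 : ∀ y, 0 ≤ v y) (h1 : ∀ y, v y ≤ 1)
    {x x' : A} (hmono : ∀ y, R x' y → R x y) : opInf R v x ≤ opInf R v x' := by
  by_cases h : ∃ y, R x' y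
  · obtain ⟨y, hy⟩ := h
    rw [opInf, if_pos ⟨y, hmono y hy⟩, opInf, if_pos ⟨y, hy⟩]
    exact csInf_le_csInf ⟨0, fun t ⟨y', _, hy'⟩ => hy' ▸ h0 y'⟩ ⟨v y, y, hy, rfl⟩
      (fun t ⟨y', hy', he⟩ => ⟨y', hmono y' hy', he⟩)
  · conv_rhs => rw [opInf, if_neg h]
    exact opInf_le_one h0 h1 x

lemma opSup_mono {R : A → B → Prop} {u : A → ℝ}
    (h0 : ∀ x, 0 ≤ u x) (h1 : ∀ x, u x ≤ 1)
    {y y' : B} (hmono : ∀ x, R x y → R x y') : opSup R u y ≤ opSup R u y' := by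
  by_cases h : ∃ x, R x y
  · obtain ⟨x, hx⟩ := h
    rw [opSup, if_pos ⟨x, hx⟩, opSup, if_pos ⟨x, hmono x hx⟩]
    exact csSup_le_csSup ⟨1, fun t ⟨x', _, hx'⟩ => hx' ▸ h1 x'⟩ ⟨u x, x, hx, rfl⟩
      (fun t ⟨x', hx', he⟩ => ⟨x', hmono x' hx', he⟩)
  · conv_lhs => rw [opSup, if_neg h]
    exact opSup_nonneg h0 h1 y'

end Helpers

/-- Aggregation for a three-process distributed system with line communication:
given representations `(u₁,v₁)` and `(u₂,v₂)` of the biorders `P̄₁₂` and `P̄₂₃`,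
the triple `(u₁ + u_{u₂}, v₁ + u₂, v₂ + v_{v₁})` is a weak representation of the
distributed system. -/
theorem stmt_11 {X₁ X₂ X₃ : Type*} [LinearOrder X₁] [LinearOrder X₂] [LinearOrder X₃]
    (P₁₂ : X₁ → X₂ → Prop) (P₂₃ : X₂ → X₃ → Prop)
    (h12fin : {p : X₁ × X₂ | P₁₂ p.1 p.2}.Finite)
    (h12s : ∀ a a' b, P₁₂ a b → P₁₂ a' b → a = a')
    (h12r : ∀ a b b', P₁₂ a b → P₁₂ a b' → b = b')
    (h23fin : {p : X₂ × X₃ | P₂₃ p.1 p.2}.Finite)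
    (h23s : ∀ a a' b, P₂₃ a b → P₂₃ a' b → a = a')
    (h23r : ∀ a b b', P₂₃ a b → P₂₃ a b' → b = b')
    (u₁ : X₁ → ℝ) (v₁ : X₂ → ℝ) (u₂ : X₂ → ℝ) (v₂ : X₃ → ℝ)
    (hu₁01 : ∀ x, u₁ x ∈ Set.Ioo (0 : ℝ) 1) (hv₁01 : ∀ y, v₁ y ∈ Set.Ioo (0 : ℝ) 1)
    (hu₂01 : ∀ y, u₂ y ∈ Set.Ioo (0 : ℝ) 1) (hv₂01 : ∀ z, v₂ z ∈ Set.Ioo (0 : ℝ) 1)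
    (hu₁ : ∀ x y : X₁, x ≤ y ↔ u₁ x ≤ u₁ y)
    (hv₁ : ∀ x y : X₂, x ≤ y ↔ v₁ x ≤ v₁ y)
    (hu₂ : ∀ x y : X₂, x ≤ y ↔ u₂ x ≤ u₂ y)
    (hv₂ : ∀ x y : X₃, x ≤ y ↔ v₂ x ≤ v₂ y)
    (hrep12 : ∀ (x : X₁) (y : X₂), pbar2 P₁₂ x y ↔ u₁ x < v₁ y)
    (hrep23 : ∀ (y : X₂) (z : X₃), pbar2 P₂₃ y z ↔ u₂ y < v₂ z) :
    (∀ x y : X₁, x ≤ y ↔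
      u₁ x + opInf (pbar2 P₁₂) u₂ x ≤ u₁ y + opInf (pbar2 P₁₂) u₂ y) ∧
    (∀ x y : X₂, x ≤ y ↔ v₁ x + u₂ x ≤ v₁ y + u₂ y) ∧
    (∀ x y : X₃, x ≤ y ↔
      v₂ x + opSup (pbar2 P₂₃) v₁ x ≤ v₂ y + opSup (pbar2 P₂₃) v₁ y) ∧
    (∀ (x : X₁) (y : X₂), pbar2 P₁₂ x y →
      u₁ x + opInf (pbar2 P₁₂) u₂ x < v₁ y + u₂ y) ∧
    (∀ (y : X₂) (z : X₃), pbar2 P₂₃ y z →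
      v₁ y + u₂ y < v₂ z + opSup (pbar2 P₂₃) v₁ z) ∧
    (∀ (x : X₁) (y : X₂) (z : X₃), pbar2 P₁₂ x y → pbar2 P₂₃ y z →
      u₁ x + opInf (pbar2 P₁₂) u₂ x < v₂ z + opSup (pbar2 P₂₃) v₁ z) := by

  have h2u0 : ∀ y, 0 ≤ u₂ y := fun y => (hu₂01 y).1.le
  have h2u1 : ∀ y, u₂ y ≤ 1 := fun y => (hu₂01 y).2.le
  have h1v0 : ∀ y, 0 ≤ v₁ y := fun y => (hv₁01 y).1.le
  have h1v1 : ∀ y, v₁ y ≤ 1 := fun y => (hv₁01 y).2.le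
  have pmono12 : ∀ {x x' : X₁}, x ≤ x' → ∀ y, pbar2 P₁₂ x' y → pbar2 P₁₂ x y := by
    rintro x x' hxx' y ⟨a, b, h1, h2, h3⟩
    exact ⟨a, b, hxx'.trans h1, h2, h3⟩
  have pmono23 : ∀ {z z' : X₃}, z ≤ z' → ∀ y, pbar2 P₂₃ y z → pbar2 P₂₃ y z' := by
    rintro z z' hzz' y ⟨a, b, h1, h2, h3⟩
    exact ⟨a, b, h1, h2, h3.trans hzz'⟩
  have part4 : ∀ (x : X₁) (y : X₂), pbar2 P₁₂ x y →
      u₁ x + opInf (pbar2 P₁₂) u₂ x < v₁ y + u₂ y := by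
    intro x y h
    exact add_lt_add_of_lt_of_le ((hrep12 x y).mp h) (opInf_le h2u0 h)
  have part5 : ∀ (y : X₂) (z : X₃), pbar2 P₂₃ y z →
      v₁ y + u₂ y < v₂ z + opSup (pbar2 P₂₃) v₁ z := by
    intro y z h
    rw [add_comm (v₂ z)]
    exact add_lt_add_of_le_of_lt (le_opSup h1v1 h) ((hrep23 y z).mp h)
  refine ⟨?_, ?_, ?_, part4, part5, ?_⟩
  · intro x y
    constructor
    · intro h
      exact add_le_add ((hu₁ x y).mp h) (opInf_mono h2u0 h2u1 (pmono12 h))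
    · intro h
      by_contra hxy
      have hyx : y ≤ x := (not_le.mp hxy).le
      have h1 : u₁ y < u₁ x := not_le.mp (fun hc => hxy ((hu₁ x y).mpr hc))
      have h2 : opInf (pbar2 P₁₂) u₂ y ≤ opInf (pbar2 P₁₂) u₂ x :=
        opInf_mono h2u0 h2u1 (pmono12 hyx)
      linarith
  · intro x y
    constructor
    · intro h
      exact add_le_add ((hv₁ x y).mp h) ((hu₂ x y).mp h)
    · intro h
      by_contra hxy
      have hyx : y ≤ x := (not_le.mp hxy).le
      have h1 : v₁ y < v₁ x := not_le.mp (fun hc => hxy ((hv₁ x y).mpr hc))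
      have h2 : u₂ y ≤ u₂ x := (hu₂ y x).mp hyx
      linarith
  · intro x y
    constructor
    · intro h
      exact add_le_add ((hv₂ x y).mp h) (opSup_mono h1v0 h1v1 (pmono23 h))
    · intro h
      by_contra hxy
      have hyx : y ≤ x := (not_le.mp hxy).le
      have h1 : v₂ y < v₂ x := not_le.mp (fun hc => hxy ((hv₂ x y).mpr hc))
      have h2 : opSup (pbar2 P₂₃) v₁ y ≤ opSup (pbar2 P₂₃) v₁ x :=
        opSup_mono h1v0 h1v1 (pmono23 hyx)
      linarith
  · intro x y z h12 h23
    exact (part4 x y h12).trans (part5 y z h23)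
end

section
/- Let ≺ be a quasi-finite partial order on X arising as the causal relation of a distributed system ⋃_{i=1}^n (X_i,≾_i) with communications P. Let w_i : X_i → (0,1) be utility functions for the total orders ≾_i, and let U = {u_l}_{l=1}^k be a Richter-Peleg multi-utility representation of the induced finite quotient poset (⋃ X_i/I_i) by integer-valued functions (so that x ≺ y between different classes forces u_l(x̄)+1 ≤ u_l(ȳ)). Define v_l(x) = u_l(x̄) + w_i(x) for x ∈ X_i. Then V = {v_l}_{l=1}^k is a Richter-Peleg multi-utility representation of ≺: for all x,y ∈ X, x ≺ y ⟺ v_l(x) < v_l(y) for every l = 1,…,k. -/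
/-- The biorder `P̄ᵢⱼ = ≾ᵢ ∘ Pᵢⱼ ∘ ≾ⱼ` between processes `i` and `j`. -/
def pbar {n : ℕ} {X : Fin n → Type*} [∀ i, Preorder (X i)]
    (P : ∀ i j, X i → X j → Prop) (i j : Fin n) (x : X i) (y : X j) : Prop :=
  ∃ (x' : X i) (y' : X j), x ≤ x' ∧ P i j x' y' ∧ y' ≤ y

/-- Generating relation of the causal precedence on `Σ i, X i`: the strict order within
each process together with the communications between distinct processes. -/
def dsBase {n : ℕ} {X : Fin n → Type*} [∀ i, Preorder (X i)]
    (P : ∀ i j, X i → X j → Prop) : (Σ i, X i) → (Σ i, X i) → Prop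
  | ⟨i, x⟩, ⟨j, y⟩ => (∃ h : i = j, (h ▸ x) < y) ∨ (i ≠ j ∧ P i j x y)

/-- The causal precedence of a distributed system: the transitive closure of the process
orders together with the communications. -/
def causal {n : ℕ} {X : Fin n → Type*} [∀ i, Preorder (X i)]
    (P : ∀ i j, X i → X j → Prop) : (Σ i, X i) → (Σ i, X i) → Prop :=
  Relation.TransGen (dsBase P)

/-- `x` and `y` in process `i` belong to the same class of the equivalence `Iᵢ`
(the intersection of all trace equivalences of the biorders `P̄ᵢⱼ` and `P̄ⱼᵢ`). -/
def classEq {n : ℕ} {X : Fin n → Type*} [∀ i, Preorder (X i)]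
    (P : ∀ i j, X i → X j → Prop) (i : Fin n) (x y : X i) : Prop :=
  ∀ j, j ≠ i → ∀ z : X j,
    (pbar P i j x z ↔ pbar P i j y z) ∧ (pbar P j i z x ↔ pbar P j i z y)

/-- Two events of a distributed system lie in the same quotient class. -/
def sameClass {n : ℕ} {X : Fin n → Type*} [∀ i, Preorder (X i)]
    (P : ∀ i j, X i → X j → Prop) : (Σ i, X i) → (Σ i, X i) → Prop
  | ⟨i, x⟩, ⟨j, y⟩ => ∃ h : i = j, classEq P j (h ▸ x) y

/-- Construction of a Richter–Peleg multi-utility for a quasi-finite partial order: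
given utilities `wᵢ : Xᵢ → (0,1)` of the process orders and an integer-valued bijective
Richter–Peleg multi-utility `{uₗ}` of the quotient poset, the functions
`vₗ(x) = uₗ(x̄) + wᵢ(x)` form a Richter–Peleg multi-utility of the causal relation. -/
theorem stmt_12 {n k : ℕ} {X : Fin n → Type*} [∀ i, LinearOrder (X i)]
    (P : ∀ i j, X i → X j → Prop)
    (hfin : ∀ i j, {p : X i × X j | P i j p.1 p.2}.Finite)
    (hs : ∀ i j (x x' : X i) (y : X j), P i j x y → P i j x' y → x = x')
    (hr : ∀ i j (x : X i) (y y' : X j), P i j x y → P i j x y' → y = y')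
    (hnd : ∀ i (x : X i) (y : X i), ¬ P i i x y)
    (hirr : ∀ p : Σ i, X i, ¬ causal P p p)
    (w : ∀ i, X i → ℝ)
    (hw : ∀ i (x y : X i), x ≤ y ↔ w i x ≤ w i y)
    (hw01 : ∀ i (x : X i), w i x ∈ Set.Ioo (0 : ℝ) 1)
    (u : Fin k → ∀ i, X i → ℤ)
    (huc : ∀ (l : Fin k) (p q : Σ i, X i), sameClass P p q → u l p.1 p.2 = u l q.1 q.2)
    (hubij : ∀ (l : Fin k) (p q : Σ i, X i), u l p.1 p.2 = u l q.1 q.2 → sameClass P p q)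
    (huRP : ∀ p q : Σ i, X i,
      (causal P p q ∧ ¬ sameClass P p q) ↔ ∀ l : Fin k, u l p.1 p.2 < u l q.1 q.2) :
    ∀ p q : Σ i, X i, causal P p q ↔
      ∀ l : Fin k, (u l p.1 p.2 : ℝ) + w p.1 p.2 < (u l q.1 q.2 : ℝ) + w q.1 q.2 := by
  intro p q
  obtain ⟨i, x⟩ := p
  obtain ⟨j, y⟩ := q
  constructor
  · intro hc l
    by_cases hsc : sameClass P ⟨i, x⟩ ⟨j, y⟩
    · obtain ⟨h, hce⟩ := hsc
      subst h
      have hu : u l i x = u l i y := huc l ⟨i, x⟩ ⟨i, y⟩ ⟨rfl, hce⟩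
      have hxy : x < y := by
        rcases lt_trichotomy x y with h1 | h1 | h1
        · exact h1
        · subst h1; exact absurd hc (hirr _)
        · exact absurd (hc.trans (Relation.TransGen.single (show dsBase P ⟨i, y⟩ ⟨i, x⟩ from Or.inl ⟨rfl, h1⟩)))
            (hirr _)
      have hwlt : w i x < w i y := by
        have h2 := (hw i y x).not
        simp only [not_le] at h2
        exact h2.mp hxy
      simp only [hu]
      linarith
    · have hlt := (huRP ⟨i, x⟩ ⟨j, y⟩).mp ⟨hc, hsc⟩ l
      have h1 : (u l i x : ℝ) + 1 ≤ u l j y := by exact_mod_cast hlt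
      have h2 := (hw01 i x).2
      have h3 := (hw01 j y).1
      simp only
      linarith
  · intro hv
    by_cases hall : ∀ l, u l i x < u l j y
    · exact ((huRP ⟨i, x⟩ ⟨j, y⟩).mpr hall).1
    · push_neg at hall
      obtain ⟨l, hl⟩ := hall
      have hvl := hv l
      have hwi := hw01 i x
      have hwj := hw01 j y
      have heq : u l i x = u l j y := by
        have h1 : (u l i x : ℝ) - u l j y < 1 := by
          simp only at hvl
          linarith [hwi.1, hwj.2]
        have h2 : u l i x - u l j y < 1 := by exact_mod_cast h1
        omega
      obtain ⟨h, hce⟩ := hubij l ⟨i, x⟩ ⟨j, y⟩ heq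
      subst h
      have hwlt : w i x < w i y := by
        simp only at hvl
        rw [heq] at hvl
        linarith
      have hxy : x < y := by
        by_contra hcon
        push_neg at hcon
        exact absurd ((hw i y x).mp hcon) (not_le.mpr hwlt)
      exact Relation.TransGen.single (Or.inl ⟨rfl, hxy⟩)
end

section
/- Let ≺ be a biorder from A to X. If there exists a pair of countable jointly dense subsets A* ⊆ A and X* ⊆ X (i.e., for all a∈A, x∈X with a ≺ x there exist a*∈A*, x*∈X* with a ≾* a* ≺ x* ≾** x), then ≺ is representable: there exist u:A→ℝ, v:X→ℝ with a ≺ x ⟺ u(a) < v(x). -/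
/-- A biorder admitting a pair of countable jointly dense subsets is representable. -/
theorem stmt_14 {A X : Type*} (r : A → X → Prop)
    (hb : ∀ a b x y, r a x → r b y → r a y ∨ r b x)
    (hdense : ∃ (As : Set A) (Xs : Set X), As.Countable ∧ Xs.Countable ∧
      ∀ a x, r a x → ∃ as ∈ As, ∃ xs ∈ Xs,
        (∀ z, r as z → r a z) ∧ r as xs ∧ (∀ c, r c xs → r c x)) :
    ∃ (u : A → ℝ) (v : X → ℝ), ∀ a x, r a x ↔ u a < v x := by
  classical
  obtain ⟨As, Xs, hAc, hXc, hd⟩ := hdense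
  by_cases hne : ∃ a x, r a x
  · obtain ⟨a0, x0, h0⟩ := hne
    set P : Set (A × X) := {p | p.1 ∈ As ∧ p.2 ∈ Xs ∧ r p.1 p.2} with hP
    have hPc : P.Countable :=
      Set.Countable.mono (fun p hp => Set.mem_prod.mpr ⟨hp.1, hp.2.1⟩) (hAc.prod hXc)
    have hPne : P.Nonempty := by
      obtain ⟨as, hasA, xs, hxsX, _, hr, _⟩ := hd a0 x0 h0
      exact ⟨(as, xs), ⟨hasA, hxsX, hr⟩⟩
    obtain ⟨f, hf⟩ := hPc.exists_eq_range hPne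
    have hmem : ∀ as xs, as ∈ As → xs ∈ Xs → r as xs → ∃ n, f n = (as, xs) := by
      intro as xs h1 h2 h3
      have : (as, xs) ∈ Set.range f := hf ▸ (⟨h1, h2, h3⟩ : (as, xs) ∈ P)
      obtain ⟨n, hn⟩ := this
      exact ⟨n, hn⟩
    -- indicator function
    set χ : Prop → ℝ := fun p => if p then 1 else 0 with hχ
    have χ_nonneg : ∀ p, 0 ≤ χ p := by
      intro p; simp only [hχ]; split <;> norm_num
    have χ_le_one : ∀ p, χ p ≤ 1 := by
      intro p; simp only [hχ]; split <;> norm_num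
    have χ_mono : ∀ p q : Prop, (p → q) → χ p ≤ χ q := by
      intro p q h; simp only [hχ]
      by_cases hp : p
      · simp [hp, h hp]
      · simp [hp]; split <;> norm_num
    have χ_true : ∀ p : Prop, p → χ p = 1 := by intro p hp; simp [hχ, hp]
    have χ_false : ∀ p : Prop, ¬ p → χ p = 0 := by intro p hp; simp [hχ, hp]
    set U : A → ℕ → ℝ := fun a n => (1/2:ℝ)^n *
      (χ (¬ ∀ z, r (f n).1 z → r a z) + χ (¬ r a (f n).2)) with hU
    set V : X → ℕ → ℝ := fun x n => (1/2:ℝ)^n *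
      (χ (r (f n).1 x) + χ (∀ c, r c (f n).2 → r c x)) with hV
    have hhalf : ∀ n : ℕ, (0:ℝ) ≤ (1/2:ℝ)^n := fun n => by positivity
    have hUnn : ∀ a n, 0 ≤ U a n := by
      intro a n
      exact mul_nonneg (hhalf n) (add_nonneg (χ_nonneg _) (χ_nonneg _))
    have hVnn : ∀ x n, 0 ≤ V x n := by
      intro x n
      exact mul_nonneg (hhalf n) (add_nonneg (χ_nonneg _) (χ_nonneg _))
    have hbound : Summable (fun n : ℕ => (1/2:ℝ)^n * 2) := by
      exact (summable_geometric_of_lt_one (by norm_num) (by norm_num)).mul_right 2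
    have hUsum : ∀ a, Summable (U a) := by
      intro a
      refine Summable.of_nonneg_of_le (hUnn a) (fun n => ?_) hbound
      exact mul_le_mul_of_nonneg_left
        (by linarith [χ_le_one (¬ ∀ z, r (f n).1 z → r a z), χ_le_one (¬ r a (f n).2)])
        (hhalf n)
    have hVsum : ∀ x, Summable (V x) := by
      intro x
      refine Summable.of_nonneg_of_le (hVnn x) (fun n => ?_) hbound
      exact mul_le_mul_of_nonneg_left
        (by linarith [χ_le_one (r (f n).1 x), χ_le_one (∀ c, r c (f n).2 → r c x)])
        (hhalf n)
    refine ⟨fun a => ∑' n, U a n, fun x => ∑' n, V x n, fun a x => ?_⟩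
    constructor
    · intro hax
      -- termwise ≤
      have hle : ∀ n, U a n ≤ V x n := by
        intro n
        refine mul_le_mul_of_nonneg_left (add_le_add ?_ ?_) (hhalf n)
        · refine χ_mono _ _ ?_
          intro h1
          push_neg at h1
          obtain ⟨z, hz1, hz2⟩ := h1
          rcases hb (f n).1 a z x hz1 hax with h | h
          · exact h
          · exact absurd h hz2
        · refine χ_mono _ _ ?_
          intro h2 c hc
          rcases hb c a (f n).2 x hc hax with h | h
          · exact h
          · exact absurd h h2
      obtain ⟨as, hasA, xs, hxsX, hst1, hmid, hst2⟩ := hd a x hax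
      obtain ⟨n0, hn0⟩ := hmem as xs hasA hxsX hmid
      have hlt : U a n0 < V x n0 := by
        have e1 : (f n0).1 = as := by rw [hn0]
        have e2 : (f n0).2 = xs := by rw [hn0]
        rw [hU, hV]
        simp only [e1, e2]
        have c1 : χ (¬ ∀ z, r as z → r a z) = 0 := χ_false _ (not_not_intro hst1)
        have c2 : χ (¬ r a xs) = 0 := χ_false _ (not_not_intro (hst1 xs hmid))
        have c3 : χ (r as x) = 1 := χ_true _ (hst2 as hmid)
        have c4 : χ (∀ c, r c xs → r c x) = 1 := χ_true _ hst2
        rw [c1, c2, c3, c4]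
        have : (0:ℝ) < (1/2:ℝ)^n0 := by positivity
        nlinarith
      exact Summable.tsum_lt_tsum_of_nonneg (hUnn a) hle hlt (hVsum x)
    · intro hlt
      by_contra hax
      have hle : ∀ n, V x n ≤ U a n := by
        intro n
        refine mul_le_mul_of_nonneg_left (add_le_add ?_ ?_) (hhalf n)
        · refine χ_mono _ _ ?_
          intro h1 h2
          exact hax (h2 x h1)
        · refine χ_mono _ _ ?_
          intro h1 h2
          exact hax (h1 a h2)
      have : ∑' n, V x n ≤ ∑' n, U a n := Summable.tsum_le_tsum hle (hVsum x) (hUsum a)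
      exact absurd hlt (not_lt.mpr this)
  · refine ⟨fun _ => 0, fun _ => 0, fun a x => ?_⟩
    push_neg at hne
    simp [hne a x]
end
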